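/- Let X be a Banach *-algebra with the Wiener property, and let J be a closed *-ideal of X that has a bounded approximate identity and the Wiener property. If J and X/J both have spectral synthesis (as Banach *-algebras), then X has spectral synthesis. -/

import Mathlib

/-!
Common definitions for formalizing "Spectral synthesis for the operator space
projective tensor product of C*-algebras" (Jain–Kumar).
-/

noncomputable section

open scoped TensorProduct
open Topology Filter

/-- The operator norm of a (rectangular) complex scalar matrix, viewed as an operator
between the corresponding Euclidean (ℓ²) spaces. -/
noncomputable def matOpNormC {m n : Type} [Fintype m] [Fintype n] (γ : Matrix m n ℂ) : ℝ :=
  sSup {r | ∃ x : n → ℂ, (∑ j, ‖x j‖ ^ 2) ≤ 1 ∧ r = Real.sqrt (∑ i, ‖∑ j, γ i j * x j‖ ^ 2)}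

/-- An (abstract) operator space structure on a complex normed space `V`:
a family of matrix norms on the square matrix levels `Mₙ(V)` satisfying Ruan's axioms
and extending the norm of `V` at the first level. -/
structure OperatorSpaceStructure (V : Type) [NormedAddCommGroup V] [NormedSpace ℂ V] where
  matNorm : ∀ {p : ℕ}, Matrix (Fin p) (Fin p) V → ℝ
  matNorm_one : ∀ v : Matrix (Fin 1) (Fin 1) V, matNorm v = ‖v 0 0‖
  matNorm_add_le : ∀ {p : ℕ} (v w : Matrix (Fin p) (Fin p) V),
    matNorm (v + w) ≤ matNorm v + matNorm w
  matNorm_smul : ∀ {p : ℕ} (c : ℂ) (v : Matrix (Fin p) (Fin p) V),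
    matNorm (c • v) = ‖c‖ * matNorm v
  matNorm_eq_zero_iff : ∀ {p : ℕ} (v : Matrix (Fin p) (Fin p) V), matNorm v = 0 ↔ v = 0
  /-- Ruan's axiom: `‖γ v δ‖ ≤ ‖γ‖ ‖v‖ ‖δ‖` for scalar matrices `γ, δ`. -/
  matNorm_comp_le : ∀ {p q : ℕ} (γ : Matrix (Fin q) (Fin p) ℂ) (v : Matrix (Fin p) (Fin p) V)
    (δ : Matrix (Fin p) (Fin q) ℂ),
    matNorm (Matrix.of fun i j => ∑ k, ∑ l, (γ i k * δ l j) • v k l) ≤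
      matOpNormC γ * matNorm v * matOpNormC δ
  /-- Ruan's axiom: the norm of a direct sum is the maximum of the norms. -/
  matNorm_dirSum : ∀ {p q : ℕ} (v : Matrix (Fin p) (Fin p) V) (w : Matrix (Fin q) (Fin q) V),
    matNorm (Matrix.reindex finSumFinEquiv finSumFinEquiv (Matrix.fromBlocks v 0 0 w)) =
      max (matNorm v) (matNorm w)

/-- The operator space projective tensor norm `‖u‖_∧` of `u ∈ V ⊗ W`, with respect to
given operator space structures on `V` and `W`:
`‖u‖_∧ = inf {‖α‖‖v‖‖w‖‖β‖ : u = α (v ⊗ w) β}`, where `α ∈ M_{1,pq}(ℂ)`,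
`v ∈ M_p(V)`, `w ∈ M_q(W)`, `β ∈ M_{pq,1}(ℂ)`. -/
noncomputable def osProjNorm {V W : Type} [NormedAddCommGroup V] [NormedSpace ℂ V]
    [NormedAddCommGroup W] [NormedSpace ℂ W]
    (osV : OperatorSpaceStructure V) (osW : OperatorSpaceStructure W) (u : V ⊗[ℂ] W) : ℝ :=
  sInf {r | ∃ (p q : ℕ) (α : Matrix (Fin 1) (Fin p × Fin q) ℂ) (v : Matrix (Fin p) (Fin p) V)
    (w : Matrix (Fin q) (Fin q) W) (β : Matrix (Fin p × Fin q) (Fin 1) ℂ),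
    u = ∑ i, ∑ j, ∑ k, ∑ l, (α 0 (i, k) * β (j, l) 0) • (v i j ⊗ₜ[ℂ] w k l) ∧
    r = matOpNormC α * osV.matNorm v * osW.matNorm w * matOpNormC β}

section StarReps

/-- A `*`-homomorphism of a complex `*`-algebra on some Hilbert space (no contractivity
required). -/
structure StarHomOn (W : Type) [NonUnitalNonAssocSemiring W] [Module ℂ W] [Star W] where
  carrier : Type
  [normedAddCommGroup : NormedAddCommGroup carrier]
  [innerProductSpace : InnerProductSpace ℂ carrier]
  [completeSpace : CompleteSpace carrier]
  hom : W →⋆ₙₐ[ℂ] (carrier →L[ℂ] carrier)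

attribute [instance] StarHomOn.normedAddCommGroup StarHomOn.innerProductSpace
  StarHomOn.completeSpace

/-- A `*`-representation of a Banach `*`-algebra on some Hilbert space: a contractive
`*`-homomorphism into the bounded operators. -/
structure StarRepOn (X : Type) [NonUnitalNonAssocSemiring X] [Module ℂ X] [Star X] [Norm X] where
  carrier : Type
  [normedAddCommGroup : NormedAddCommGroup carrier]
  [innerProductSpace : InnerProductSpace ℂ carrier]
  [completeSpace : CompleteSpace carrier]
  hom : X →⋆ₙₐ[ℂ] (carrier →L[ℂ] carrier)
  contractive : ∀ x, ‖hom x‖ ≤ ‖x‖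

attribute [instance] StarRepOn.normedAddCommGroup StarRepOn.innerProductSpace
  StarRepOn.completeSpace

/-- Topological irreducibility of a `*`-representation: it is nonzero and the only closed
invariant subspaces are `⊥` and `⊤`. -/
def StarRepOn.IsIrreducible {X : Type} [NonUnitalNonAssocSemiring X] [Module ℂ X] [Star X]
    [Norm X] (ρ : StarRepOn X) : Prop :=
  (∃ x, ρ.hom x ≠ 0) ∧
    ∀ U : Submodule ℂ ρ.carrier, IsClosed (U : Set ρ.carrier) →
      (∀ x : X, ∀ v ∈ U, ρ.hom x v ∈ U) → U = ⊥ ∨ U = ⊤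

end StarReps

section BanachStar

variable (X : Type) [NonUnitalNormedRing X] [StarRing X] [NormedSpace ℂ X]

/-- A closed two-sided ideal of `X`. -/
def IsClosedIdeal (I : Submodule ℂ X) : Prop :=
  IsClosed (I : Set X) ∧ (∀ x : X, ∀ y ∈ I, x * y ∈ I) ∧ (∀ x : X, ∀ y ∈ I, y * x ∈ I)

/-- A `*`-ideal: an ideal closed under the involution. -/
def IsStarIdeal (I : Submodule ℂ X) : Prop := ∀ x ∈ I, star x ∈ I

/-- A primitive ideal of `X`: the kernel of an irreducible `*`-representation of `X` on a
Hilbert space. -/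
def IsPrimitiveIdeal (P : Submodule ℂ X) : Prop :=
  ∃ ρ : StarRepOn X, ρ.IsIrreducible ∧ (P : Set X) = {x | ρ.hom x = 0}

/-- The hull of a subset `M` of `X`: all primitive ideals containing `M`. -/
def hullOf (M : Set X) : Set (Submodule ℂ X) := {P | IsPrimitiveIdeal X P ∧ M ⊆ (P : Set X)}

/-- The kernel of a collection of ideals: their intersection. -/
def kernelOf (E : Set (Submodule ℂ X)) : Submodule ℂ X := sInf E

/-- A set of primitive ideals which is closed in the hull-kernel topology:
`E = h(k(E))`. -/
def IsHkClosed (E : Set (Submodule ℂ X)) : Prop :=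
  (∀ P ∈ E, IsPrimitiveIdeal X P) ∧ hullOf X (kernelOf X E : Set X) = E

/-- A (closed) subset `E` of `Prim(X)` is spectral if `k(E)` is the only closed ideal of `X`
whose hull equals `E`. -/
def IsSpectralSet (E : Set (Submodule ℂ X)) : Prop :=
  ∀ J : Submodule ℂ X, IsClosedIdeal X J → hullOf X (J : Set X) = E → J = kernelOf X E

/-- `X` has spectral synthesis if every hull-kernel closed subset of `Prim(X)` is spectral. -/
def HasSpectralSynthesis : Prop :=
  ∀ E : Set (Submodule ℂ X), IsHkClosed X E → IsSpectralSet X E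

/-- The Wiener property: every proper closed two-sided ideal of `X` is annihilated by some
irreducible `*`-representation, i.e. is contained in a primitive ideal. -/
def WienerProperty : Prop :=
  ∀ I : Submodule ℂ X, IsClosedIdeal X I → I ≠ ⊤ → ∃ P, IsPrimitiveIdeal X P ∧ I ≤ P

/-- The topology `τ_w` on the collection of ideals of `X`, generated by the sub-basic open
sets `Z_J = {I : I ⊉ J}` for closed ideals `J`. -/
def tauW : TopologicalSpace (Submodule ℂ X) :=
  .generateFrom {S | ∃ J : Submodule ℂ X, IsClosedIdeal X J ∧ S = {I | ¬ J ≤ I}}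

/-- A (two-sided) bounded approximate identity for an ideal `J` of `X`. -/
def HasBoundedApproxIdentity (J : Submodule ℂ X) : Prop :=
  ∃ (ι : Type) (l : Filter ι) (e : ι → X) (C : ℝ), l.NeBot ∧ (∀ i, e i ∈ J ∧ ‖e i‖ ≤ C) ∧
    ∀ y ∈ J, Filter.Tendsto (fun i => e i * y) l (nhds y) ∧
      Filter.Tendsto (fun i => y * e i) l (nhds y)

/-- A closed prime ideal of `X`: a proper closed ideal `P` such that `I·J ⊆ P` implies
`I ⊆ P` or `J ⊆ P` for closed ideals `I`, `J`. -/
def IsPrimeIdeal (P : Submodule ℂ X) : Prop :=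
  IsClosedIdeal X P ∧ P ≠ ⊤ ∧
    ∀ I J : Submodule ℂ X, IsClosedIdeal X I → IsClosedIdeal X J →
      (∀ x ∈ I, ∀ y ∈ J, x * y ∈ P) → I ≤ P ∨ J ≤ P

/-- The closed ideal generated by products of elements of `J` and `K`. -/
def mulIdeal (J K : Submodule ℂ X) : Submodule ℂ X :=
  (Submodule.span ℂ {z : X | ∃ x ∈ J, ∃ y ∈ K, z = x * y}).topologicalClosure

end BanachStar

section Models

variable (X : Type) [NonUnitalNormedRing X] [StarRing X] [NormedSpace ℂ X]

/-- A realization of a closed `*`-ideal `J` of `X` as a Banach `*`-algebra `Y`: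
an isometric `*`-isomorphism of `Y` onto `J`. -/
structure SubalgebraModel (J : Submodule ℂ X) (Y : Type) [NonUnitalNormedRing Y] [StarRing Y]
    [NormedSpace ℂ Y] where
  incl : Y →⋆ₙₐ[ℂ] X
  isometric : ∀ y, ‖incl y‖ = ‖y‖
  range_eq : Set.range incl = (J : Set X)

/-- A realization of the quotient Banach `*`-algebra `X/J`: a surjective `*`-homomorphism
with kernel `J`, carrying the quotient norm. -/
structure QuotientModel (J : Submodule ℂ X) (Z : Type) [NonUnitalNormedRing Z] [StarRing Z]
    [NormedSpace ℂ Z] where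
  proj : X →⋆ₙₐ[ℂ] Z
  surjective : Function.Surjective proj
  ker_eq : ∀ x, proj x = 0 ↔ x ∈ J
  norm_eq : ∀ x, ‖proj x‖ = Metric.infDist x (J : Set X)

end Models

section CStarTensor

/-- The canonical C*-norm on square matrices over a C*-algebra `A`, described as the
supremum of `‖π v‖` over all `*`-homomorphisms `π` of `M_p(A)` on Hilbert spaces. -/
noncomputable def matCStarNorm {A : Type} [NonUnitalCStarAlgebra A] {p : ℕ}
    (v : Matrix (Fin p) (Fin p) A) : ℝ :=
  sSup {r | ∃ ρ : StarHomOn (Matrix (Fin p) (Fin p) A), r = ‖ρ.hom v‖}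

/-- The operator space projective tensor norm `‖·‖_∧` on the algebraic tensor product
`A ⊗ B` of two C*-algebras. -/
noncomputable def projTensorNorm (A B : Type) [NonUnitalCStarAlgebra A] [NonUnitalCStarAlgebra B]
    (u : A ⊗[ℂ] B) : ℝ :=
  sInf {r | ∃ (p q : ℕ) (α : Matrix (Fin 1) (Fin p × Fin q) ℂ) (v : Matrix (Fin p) (Fin p) A)
    (w : Matrix (Fin q) (Fin q) B) (β : Matrix (Fin p × Fin q) (Fin 1) ℂ),
    u = ∑ i, ∑ j, ∑ k, ∑ l, (α 0 (i, k) * β (j, l) 0) • (v i j ⊗ₜ[ℂ] w k l) ∧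
    r = matOpNormC α * matCStarNorm v * matCStarNorm w * matOpNormC β}

/-- A realization of the operator space projective tensor product `A ⊗̂ B` of two
C*-algebras: a Banach `*`-algebra `X` containing `A ⊗ B` isometrically (for `‖·‖_∧`) and
densely, with multiplication and involution induced by the natural ones. -/
structure OSProjTensorProduct (A B : Type) [NonUnitalCStarAlgebra A] [NonUnitalCStarAlgebra B]
    (X : Type) [NonUnitalNormedRing X] [StarRing X] [NormedSpace ℂ X] [CompleteSpace X] where
  emb : (A ⊗[ℂ] B) →ₗ[ℂ] X
  norm_emb : ∀ u, ‖emb u‖ = projTensorNorm A B u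
  dense_range : DenseRange fun u => emb u
  mul_emb : ∀ (a c : A) (b d : B),
    emb (a ⊗ₜ[ℂ] b) * emb (c ⊗ₜ[ℂ] d) = emb ((a * c) ⊗ₜ[ℂ] (b * d))
  star_emb : ∀ (a : A) (b : B), star (emb (a ⊗ₜ[ℂ] b)) = emb (star a ⊗ₜ[ℂ] star b)

/-- A realization of a C*-tensor norm completion of `A ⊗ B`: a C*-algebra `Y` containing
`A ⊗ B` injectively and densely, with the natural multiplication and involution. -/
structure CStarTensorRealization (A B : Type) [NonUnitalCStarAlgebra A] [NonUnitalCStarAlgebra B]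
    (Y : Type) [NonUnitalCStarAlgebra Y] where
  emb : (A ⊗[ℂ] B) →ₗ[ℂ] Y
  injective : Function.Injective emb
  dense_range : DenseRange fun u => emb u
  mul_emb : ∀ (a c : A) (b d : B),
    emb (a ⊗ₜ[ℂ] b) * emb (c ⊗ₜ[ℂ] d) = emb ((a * c) ⊗ₜ[ℂ] (b * d))
  star_emb : ∀ (a : A) (b : B), star (emb (a ⊗ₜ[ℂ] b)) = emb (star a ⊗ₜ[ℂ] star b)

/-- A realization of the minimal (spatial) C*-tensor product `A ⊗_min B`: a C*-tensor norm
completion of `A ⊗ B` whose norm is minimal among all C*-tensor norms on `A ⊗ B`. -/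
structure MinTensorProduct (A B : Type) [NonUnitalCStarAlgebra A] [NonUnitalCStarAlgebra B]
    (Y : Type) [NonUnitalCStarAlgebra Y] extends CStarTensorRealization A B Y where
  norm_min : ∀ (Z : Type) [NonUnitalCStarAlgebra Z] (r : CStarTensorRealization A B Z)
    (u : A ⊗[ℂ] B), ‖emb u‖ ≤ ‖r.emb u‖

variable {A B : Type} [NonUnitalCStarAlgebra A] [NonUnitalCStarAlgebra B]
variable {X : Type} [NonUnitalNormedRing X] [StarRing X] [NormedSpace ℂ X] [CompleteSpace X]
variable {Y : Type} [NonUnitalCStarAlgebra Y]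

/-- The product ideal `M ⊗̂ N`: the closure in `A ⊗̂ B` of the span of elementary tensors
`a ⊗ b` with `a ∈ M`, `b ∈ N`. -/
noncomputable def prodIdeal (P : OSProjTensorProduct A B X) (M : Submodule ℂ A)
    (N : Submodule ℂ B) : Submodule ℂ X :=
  (Submodule.span ℂ {x : X | ∃ a ∈ M, ∃ b ∈ N, x = P.emb (a ⊗ₜ[ℂ] b)}).topologicalClosure

/-- The closed ideal `Φ(M, N) = A ⊗̂ N + M ⊗̂ B` of `A ⊗̂ B`. -/
noncomputable def PhiIdeal (P : OSProjTensorProduct A B X) (M : Submodule ℂ A)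
    (N : Submodule ℂ B) : Submodule ℂ X :=
  (prodIdeal P ⊤ N ⊔ prodIdeal P M ⊤).topologicalClosure

/-- The lower ideal `J_l` associated with a closed ideal `J` of `A ⊗̂ B`: the closure of the
span of all elementary tensors belonging to `J`. -/
noncomputable def lowerIdeal (P : OSProjTensorProduct A B X) (J : Submodule ℂ X) :
    Submodule ℂ X :=
  (Submodule.span ℂ {x : X | x ∈ J ∧ ∃ (a : A) (b : B), x = P.emb (a ⊗ₜ[ℂ] b)}).topologicalClosure

/-- The upper ideal `J^u = J_min ∩ (A ⊗̂ B)` associated with a closed ideal `J` of `A ⊗̂ B`,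
where `i : A ⊗̂ B → A ⊗_min B` is the canonical inclusion and `J_min` is the closure of
`i(J)` in `A ⊗_min B`. -/
noncomputable def upperIdeal (i : X →L[ℂ] Y) (J : Submodule ℂ X) : Submodule ℂ X :=
  Submodule.comap (i.toLinearMap) ((Submodule.map (i.toLinearMap) J).topologicalClosure)

/-- `i : X → Y` is the canonical `*`-homomorphism `A ⊗̂ B → A ⊗_min B` for the given
realizations: the continuous map which is the identity on the algebraic tensor product. -/
def IsCanonicalInclusion (P : OSProjTensorProduct A B X) (Mn : MinTensorProduct A B Y)
    (i : X →L[ℂ] Y) : Prop :=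
  ∀ u : A ⊗[ℂ] B, i (P.emb u) = Mn.emb u

/-- A closed ideal `J` of `A ⊗̂ B` is spectral if `J_l = J = J^u`. -/
def IsSpectralIdeal (P : OSProjTensorProduct A B X) (i : X →L[ℂ] Y) (J : Submodule ℂ X) :
    Prop :=
  lowerIdeal P J = J ∧ upperIdeal i J = J

/-- The product ideal `M ⊗_min N` inside a realization of `A ⊗_min B`. -/
noncomputable def minProdIdeal (Mn : MinTensorProduct A B Y) (M : Submodule ℂ A)
    (N : Submodule ℂ B) : Submodule ℂ Y :=
  (Submodule.span ℂ {y : Y | ∃ a ∈ M, ∃ b ∈ N, y = Mn.emb (a ⊗ₜ[ℂ] b)}).topologicalClosure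

/-- A realization of the quotient of a C*-algebra `A` by a closed ideal `M`: a surjective
`*`-homomorphism with kernel `M` (for C*-algebras, such a map automatically carries the
quotient norm). -/
structure CStarQuotientModel (A : Type) [NonUnitalCStarAlgebra A] (M : Submodule ℂ A)
    (A' : Type) [NonUnitalCStarAlgebra A'] where
  proj : A →⋆ₙₐ[ℂ] A'
  surjective : Function.Surjective proj
  ker_eq : ∀ a, proj a = 0 ↔ a ∈ M

end CStarTensor

/-- A realization of the Banach `*`-algebra `A ⊗̂_r A`: the operator space projective tensor
product `A ⊗̂ A` equipped with the reverse involution `(a ⊗ b)* = b* ⊗ a*`. -/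
structure OSProjTensorSquareRev (A : Type) [NonUnitalCStarAlgebra A]
    (X : Type) [NonUnitalNormedRing X] [StarRing X] [NormedSpace ℂ X] [CompleteSpace X] where
  emb : (A ⊗[ℂ] A) →ₗ[ℂ] X
  norm_emb : ∀ u, ‖emb u‖ = projTensorNorm A A u
  dense_range : DenseRange fun u => emb u
  mul_emb : ∀ a b c d : A,
    emb (a ⊗ₜ[ℂ] b) * emb (c ⊗ₜ[ℂ] d) = emb ((a * c) ⊗ₜ[ℂ] (b * d))
  star_emb : ∀ a b : A, star (emb (a ⊗ₜ[ℂ] b)) = emb (star b ⊗ₜ[ℂ] star a)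

end

/-!
Let `L` be a closed ideal with the same hull as `K = k(E)`, so that `L ≤ K`. Primitive ideals of
`X/J` pull back to primitive ideals of `X`, and irreducible representations of `J` extend to `X`
thanks to the bounded approximate identity, so the images of `L` and `K` in `X/J` and their traces
on `J` have equal hulls. Spectral synthesis in `X/J` and in `J` makes them equal: `K` lies in the
closure of `L + J`, and `K ⊓ J ≤ L`. The approximate identity of `J` glues these two facts into
`K ≤ L`.
-/

open Filter Topology

lemma le_of_forall_pow_two_pow_le {a b C : ℝ} (hb : 0 ≤ b)
    (h : ∀ n : ℕ, a ^ 2 ^ n ≤ C * b ^ 2 ^ n) : a ≤ b := by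
  by_contra! hba
  rcases hb.eq_or_lt with rfl | hb
  · simpa [hba.not_ge] using h 0
  · have hlim : Tendsto (fun n : ℕ => (a / b) ^ 2 ^ n) atTop atTop :=
      (tendsto_pow_atTop_atTop_of_one_lt ((one_lt_div hb).2 hba)).comp
        (tendsto_pow_atTop_atTop_of_one_lt one_lt_two)
    obtain ⟨n, hn⟩ := (hlim.eventually_gt_atTop C).exists
    exact hn.not_ge (by rw [div_pow, div_le_iff₀ (by positivity)]; exact h n)

lemma norm_iterate_mul_self_le {R : Type*} [NonUnitalSeminormedRing R] (b : R) (n : ℕ) :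
    ‖(fun a => a * a)^[n] b‖ ≤ ‖b‖ ^ 2 ^ n := by
  induction n with
  | zero => simp
  | succ n ih =>
    rw [Function.iterate_succ_apply', pow_succ, pow_mul, sq]
    exact (norm_mul_le _ _).trans (mul_le_mul ih ih (norm_nonneg _) (by positivity))

/-- On self-adjoint `b` the C*-identity gives `‖φ b‖ ^ 2 ^ n ≤ C * ‖b‖ ^ 2 ^ n` for all `n`. -/
lemma NonUnitalStarAlgHom.norm_apply_le_of_le_mul {X B : Type*} [NonUnitalNormedRing X]
    [StarRing X] [NormedStarGroup X] [Module ℂ X] [NormedRing B] [StarRing B] [CStarRing B]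
    [Module ℂ B] (φ : X →⋆ₙₐ[ℂ] B) {C : ℝ} (hC : ∀ x, ‖φ x‖ ≤ C * ‖x‖) (x : X) :
    ‖φ x‖ ≤ ‖x‖ := by
  have hC' : ∀ x, ‖φ x‖ ≤ max C 0 * ‖x‖ := fun x =>
    (hC x).trans (mul_le_mul_of_nonneg_right (le_max_left _ _) (norm_nonneg x))
  have hsa : ∀ b, IsSelfAdjoint b → ‖φ b‖ ≤ ‖b‖ := by
    intro b hb
    refine le_of_forall_pow_two_pow_le (C := max C 0) (norm_nonneg _) fun n => ?_
    have hpow : φ ((fun a => a * a)^[n] b) = φ b ^ 2 ^ n := by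
      induction n with
      | zero => simp
      | succ n ih => rw [Function.iterate_succ_apply', map_mul, ih, pow_succ, pow_mul, sq]
    calc ‖φ b‖ ^ 2 ^ n = ‖φ ((fun a => a * a)^[n] b)‖ := by
          rw [hpow, (hb.map φ).norm_pow_two_pow]
      _ ≤ max C 0 * ‖(fun a => a * a)^[n] b‖ := hC' _
      _ ≤ max C 0 * ‖b‖ ^ 2 ^ n :=
          mul_le_mul_of_nonneg_left (norm_iterate_mul_self_le b n) (le_max_right _ _)
  have hsq : ‖φ x‖ * ‖φ x‖ ≤ ‖x‖ * ‖x‖ := by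
    calc ‖φ x‖ * ‖φ x‖ = ‖φ (star x * x)‖ := by rw [map_mul, map_star, CStarRing.norm_star_mul_self]
      _ ≤ ‖star x * x‖ := hsa _ (.star_mul_self x)
      _ ≤ ‖x‖ * ‖x‖ := by simpa using norm_mul_le (star x) x
  exact (mul_self_le_mul_self_iff (norm_nonneg _) (norm_nonneg _)).2 hsq

lemma ContinuousLinearMap.cauchy_map_apply_of_dense {𝕜 E F ι : Type*}
    [NontriviallyNormedField 𝕜] [NormedAddCommGroup E] [NormedSpace 𝕜 E] [NormedAddCommGroup F]
    [NormedSpace 𝕜 F] {l : Filter ι} [l.NeBot] {A : ι → E →L[𝕜] F} {M : ℝ}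
    (hA : ∀ i, ‖A i‖ ≤ M) {s : Set E} (hs : Dense s)
    (hconv : ∀ x ∈ s, ∃ y, Tendsto (fun i => A i x) l (𝓝 y)) (x : E) :
    Cauchy (map (fun i => A i x) l) := by
  have hM : 0 ≤ M := (norm_nonneg _).trans (hA (nonempty_of_neBot l).some)
  refine Metric.cauchy_iff.2 ⟨inferInstance, fun ε hε => ?_⟩
  obtain ⟨w, hw, hxw⟩ := Metric.mem_closure_iff.1 (hs x) (ε / (4 * (M + 1))) (by positivity)
  obtain ⟨y, hy⟩ := hconv w hw
  refine ⟨_, image_mem_map (Metric.tendsto_nhds.1 hy (ε / 4) (by positivity)), ?_⟩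
  have hclose : ∀ i, dist (A i x) (A i w) < ε / 4 := fun i => calc
    dist (A i x) (A i w) ≤ (M + 1) * dist x w := by
        rw [dist_eq_norm, dist_eq_norm, ← map_sub]
        exact (A i).le_of_opNorm_le ((hA i).trans (by linarith)) _
    _ < (M + 1) * (ε / (4 * (M + 1))) := by gcongr
    _ = ε / 4 := by field_simp
  rintro _ ⟨i, hi, rfl⟩ _ ⟨j, hj, rfl⟩
  replace hi : dist (A i w) y < ε / 4 := hi
  replace hj : dist (A j w) y < ε / 4 := hj
  have := dist_triangle4 (A i x) (A i w) (A j w) (A j x)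
  have := dist_triangle (A i w) y (A j w)
  linarith [hclose i, hclose j, dist_comm (A j w) (A j x), dist_comm y (A j w)]

lemma ContinuousLinearMap.exists_tendsto_apply_of_dense_span {𝕜 E F ι : Type*}
    [NontriviallyNormedField 𝕜] [NormedAddCommGroup E] [NormedSpace 𝕜 E] [NormedAddCommGroup F]
    [NormedSpace 𝕜 F] [CompleteSpace F] {l : Filter ι} [l.NeBot] {A : ι → E →L[𝕜] F} {M : ℝ}
    (hA : ∀ i, ‖A i‖ ≤ M) {s : Set E} (hs : Dense (Submodule.span 𝕜 s : Set E))
    (hconv : ∀ x ∈ s, ∃ y, Tendsto (fun i => A i x) l (𝓝 y)) :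
    ∃ T : E →L[𝕜] F, ‖T‖ ≤ M ∧ ∀ x, Tendsto (fun i => A i x) l (𝓝 (T x)) := by
  have hspan : ∀ x ∈ Submodule.span 𝕜 s, ∃ y, Tendsto (fun i => A i x) l (𝓝 y) := by
    intro x hx
    induction hx using Submodule.span_induction with
    | mem x hx => exact hconv x hx
    | zero => exact ⟨0, by simp⟩
    | add x x' _ _ h h' =>
      obtain ⟨y, hy⟩ := h
      obtain ⟨y', hy'⟩ := h'
      exact ⟨y + y', by simpa using hy.add hy'⟩
    | smul c x _ h =>
      obtain ⟨y, hy⟩ := h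
      exact ⟨c • y, by simpa using hy.const_smul c⟩
  choose f hf using fun x =>
    cauchy_map_iff_exists_tendsto.1 (cauchy_map_apply_of_dense hA hs hspan x)
  refine ⟨ofTendstoOfBoundedRange f A (tendsto_pi_nhds.2 hf)
    (isBounded_iff_forall_norm_le.2 ⟨M, by rintro _ ⟨i, rfl⟩; exact hA i⟩), ?_, hf⟩
  have hM : 0 ≤ M := (norm_nonneg _).trans (hA (nonempty_of_neBot l).some)
  refine opNorm_le_bound _ hM fun x => le_of_tendsto (hf x).norm (Eventually.of_forall fun i => ?_)
  exact (A i).le_of_opNorm_le (hA i) x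

lemma isClosedIdeal_topologicalClosure {W : Type} [NonUnitalNormedRing W] [NormedSpace ℂ W]
    {S : Submodule ℂ W}
    (hS : ∀ x, ∀ y ∈ S, x * y ∈ S ∧ y * x ∈ S) : IsClosedIdeal W S.topologicalClosure := by
  refine ⟨S.isClosed_topologicalClosure, fun x y hy => ?_, fun x y hy => ?_⟩ <;>
    rw [← SetLike.mem_coe, S.topologicalClosure_coe] at hy ⊢
  · exact Set.MapsTo.closure (fun y hy => (hS x y hy).1) (continuous_const_mul x) hy
  · exact Set.MapsTo.closure (fun y hy => (hS x y hy).2) (continuous_mul_const x) hy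

section PrimitiveIdeals

variable {W : Type} [NonUnitalNormedRing W] [StarRing W] [NormedSpace ℂ W]

lemma StarRepOn.continuous_hom (ρ : StarRepOn W) : Continuous ρ.hom :=
  AddMonoidHomClass.continuous_of_bound ρ.hom 1 fun x => by simpa using ρ.contractive x

lemma IsPrimitiveIdeal.isClosedIdeal {P : Submodule ℂ W} (hP : IsPrimitiveIdeal W P) :
    IsClosedIdeal W P := by
  obtain ⟨ρ, -, hker⟩ := hP
  have hmem : ∀ x, x ∈ P ↔ ρ.hom x = 0 := fun x => Set.ext_iff.1 hker x
  refine ⟨?_, fun x y hy => ?_, fun x y hy => ?_⟩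
  · rw [hker]; exact isClosed_eq ρ.continuous_hom continuous_const
  · rw [hmem] at hy ⊢; rw [map_mul, hy, mul_zero]
  · rw [hmem] at hy ⊢; rw [map_mul, hy, zero_mul]

lemma isClosedIdeal_kernelOf {E : Set (Submodule ℂ W)} (hE : ∀ P ∈ E, IsPrimitiveIdeal W P) :
    IsClosedIdeal W (kernelOf W E) := by
  have hmem : ∀ x, x ∈ kernelOf W E ↔ ∀ P ∈ E, x ∈ P := fun x => Submodule.mem_sInf
  refine ⟨?_, fun x y hy => ?_, fun x y hy => ?_⟩
  · rw [kernelOf, Submodule.coe_sInf]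
    exact isClosed_biInter fun P hP => (hE P hP).isClosedIdeal.1
  · exact (hmem _).2 fun P hP => (hE P hP).isClosedIdeal.2.1 x y ((hmem y).1 hy P hP)
  · exact (hmem _).2 fun P hP => (hE P hP).isClosedIdeal.2.2 x y ((hmem y).1 hy P hP)

lemma isHkClosed_hullOf (M : Set W) : IsHkClosed W (hullOf W M) := by
  refine ⟨fun P hP => hP.1, Set.ext fun P => ⟨fun hP => ⟨hP.1, ?_⟩, fun hP => ⟨hP.1, ?_⟩⟩⟩
  · exact fun x hx => hP.2 (Submodule.mem_sInf.2 fun Q hQ => hQ.2 hx)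
  · exact fun x hx => Submodule.mem_sInf.1 hx P hP

lemma HasSpectralSynthesis.eq_of_hullOf_eq (hW : HasSpectralSynthesis W) {I I' : Submodule ℂ W}
    (hI : IsClosedIdeal W I) (hI' : IsClosedIdeal W I')
    (h : hullOf W (I : Set W) = hullOf W I') : I = I' :=
  (hW _ (isHkClosed_hullOf _) I hI h).trans (hW _ (isHkClosed_hullOf _) I' hI' rfl).symm

lemma HasSpectralSynthesis.eq_of_lift {V : Type} [NonUnitalNormedRing V] [StarRing V]
    [NormedSpace ℂ V] (hV : HasSpectralSynthesis V) (φ : Submodule ℂ W → Submodule ℂ V)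
    (hφ : Monotone φ) (hφI : ∀ I, IsClosedIdeal W I → IsClosedIdeal V (φ I))
    (hlift : ∀ I, IsClosedIdeal W I → ∀ Q, IsPrimitiveIdeal V Q → φ I ≤ Q →
      ∃ P, IsPrimitiveIdeal W P ∧ I ≤ P ∧ φ P ≤ Q)
    {I I' : Submodule ℂ W} (hI : IsClosedIdeal W I) (hI' : IsClosedIdeal W I')
    (h : hullOf W (I : Set W) = hullOf W I') : φ I = φ I' := by
  have hsub : ∀ I I' : Submodule ℂ W, IsClosedIdeal W I → hullOf W (I : Set W) = hullOf W I' →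
      hullOf V (φ I : Set V) ⊆ hullOf V (φ I') := by
    rintro I I' hI h Q ⟨hQ, hIQ⟩
    obtain ⟨P, hP, hIP, hPQ⟩ := hlift I hI Q hQ hIQ
    have hI'P : P ∈ hullOf W (I' : Set W) := h ▸ ⟨hP, hIP⟩
    exact ⟨hQ, (hφ hI'P.2).trans hPQ⟩
  exact hV.eq_of_hullOf_eq (hφI I hI) (hφI I' hI')
    ((hsub I I' hI h).antisymm (hsub I' I hI' h.symm))

end PrimitiveIdeals

/-- If `k ∈ K` is close to `a + b` with `a ∈ L`, `b ∈ J`, then `a + (k - a) * eᵢ ∈ L` is close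
to `k`. -/
lemma le_of_inf_le_of_le_closure_sup {W : Type} [NonUnitalNormedRing W] [NormedSpace ℂ W]
    {J K L : Submodule ℂ W} (hbai : HasBoundedApproxIdentity W J)
    (hJ : IsClosedIdeal W J) (hK : IsClosedIdeal W K) (hL : IsClosedIdeal W L)
    (hKJ : K ⊓ J ≤ L) (hKLJ : K ≤ (L ⊔ J).topologicalClosure) : K ≤ L := by
  obtain ⟨ι, l, e, C, hl, he, hconv⟩ := hbai
  have hC : 0 ≤ C := (norm_nonneg _).trans (he (nonempty_of_neBot l).some).2
  intro k hk
  rw [← SetLike.mem_coe, ← hL.1.closure_eq, Metric.mem_closure_iff]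
  intro ε hε
  have hδ : 0 < ε / (C + 2) := by positivity
  have hk' := hKLJ hk
  rw [← SetLike.mem_coe, Submodule.topologicalClosure_coe] at hk'
  obtain ⟨_, hs, hks⟩ := Metric.mem_closure_iff.1 hk' _ hδ
  obtain ⟨a, ha, b, hb, rfl⟩ := Submodule.mem_sup.1 hs
  obtain ⟨i, hi⟩ := (Metric.tendsto_nhds.1 (hconv b hb).2 _ hδ).exists
  refine ⟨a + (k - a) * e i, L.add_mem ha ?_, ?_⟩
  · rw [sub_mul]
    exact L.sub_mem (hKJ ⟨hK.2.2 _ _ hk, hJ.2.1 _ _ (he i).1⟩) (hL.2.2 _ _ ha)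
  rw [dist_eq_norm] at hks hi ⊢
  calc ‖k - (a + (k - a) * e i)‖ = ‖(k - (a + b)) - (k - (a + b)) * e i - (b * e i - b)‖ := by
        congr 1; noncomm_ring
    _ ≤ ‖k - (a + b)‖ + ‖k - (a + b)‖ * C + ‖b * e i - b‖ := by
        have := norm_sub_le (k - (a + b) - (k - (a + b)) * e i) (b * e i - b)
        have := norm_sub_le (k - (a + b)) ((k - (a + b)) * e i)
        have := (norm_mul_le (k - (a + b)) (e i)).trans
          (mul_le_mul_of_nonneg_left (he i).2 (norm_nonneg _))
        linarith
    _ < ε / (C + 2) + ε / (C + 2) * C + ε / (C + 2) := by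
        linarith [mul_le_mul_of_nonneg_right hks.le hC]
    _ = ε := by field_simp; ring

namespace StarRepOn

variable {Y : Type} [NonUnitalNormedRing Y] [StarRing Y] [NormedSpace ℂ Y] {ρ : StarRepOn Y}

lemma IsIrreducible.dense_span (hρ : ρ.IsIrreducible) :
    Dense (Submodule.span ℂ {v | ∃ y ξ, ρ.hom y ξ = v} : Set ρ.carrier) := by
  set D := Submodule.span ℂ {v | ∃ y ξ, ρ.hom y ξ = v}
  have hinv : ∀ y, D ≤ D.comap (ρ.hom y : ρ.carrier →ₗ[ℂ] ρ.carrier) := fun y =>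
    Submodule.span_le.2 <| by
      rintro _ ⟨y', ξ, rfl⟩
      exact Submodule.subset_span ⟨y * y', ξ, by simp⟩
  have hinv' : ∀ y, D.topologicalClosure ≤
      D.topologicalClosure.comap (ρ.hom y : ρ.carrier →ₗ[ℂ] ρ.carrier) := fun y =>
    D.topologicalClosure_minimal ((hinv y).trans (Submodule.comap_mono D.le_topologicalClosure))
      (D.isClosed_topologicalClosure.preimage (ρ.hom y).continuous)
  rcases hρ.2 _ D.isClosed_topologicalClosure fun y v hv => hinv' y hv with h | h
  · obtain ⟨y, hy⟩ := hρ.1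
    refine absurd (ContinuousLinearMap.ext fun ξ => ?_) hy
    simpa [h] using D.le_topologicalClosure (Submodule.subset_span ⟨y, ξ, rfl⟩)
  · exact Submodule.dense_iff_topologicalClosure_eq_top.2 h

lemma IsIrreducible.eq_of_mul_hom_eq (hρ : ρ.IsIrreducible) {A B : ρ.carrier →L[ℂ] ρ.carrier}
    (h : ∀ y, A * ρ.hom y = B * ρ.hom y) : A = B :=
  ContinuousLinearMap.ext_on hρ.dense_span <| by
    rintro _ ⟨y, ξ, rfl⟩
    exact DFunLike.congr_fun (h y) ξ

lemma IsIrreducible.eq_of_hom_mul_eq (hρ : ρ.IsIrreducible) {A B : ρ.carrier →L[ℂ] ρ.carrier}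
    (h : ∀ y, ρ.hom y * A = ρ.hom y * B) : A = B :=
  star_injective <| hρ.eq_of_mul_hom_eq fun y => by
    rw [← star_star (ρ.hom y), ← map_star, ← star_mul, h, star_mul]

/-- `T` is the strong limit of `ρ (L (e i))`. -/
lemma IsIrreducible.exists_mul_hom_eq (hρ : ρ.IsIrreducible) {ι : Type*} {l : Filter ι} [l.NeBot]
    {e : ι → Y} {C : ℝ} (heC : ∀ i, ‖e i‖ ≤ C) (he : ∀ y, Tendsto (fun i => e i * y) l (𝓝 y))
    (L : Y →L[ℂ] Y) (hL : ∀ y y', L (y * y') = L y * y') :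
    ∃ T : ρ.carrier →L[ℂ] ρ.carrier, ‖T‖ ≤ ‖L‖ * C ∧ ∀ y, T * ρ.hom y = ρ.hom (L y) := by
  have hA : ∀ i, ‖ρ.hom (L (e i))‖ ≤ ‖L‖ * C := fun i =>
    (ρ.contractive _).trans ((L.le_opNorm _).trans (by gcongr; exact heC i))
  have hlim : ∀ y ξ, Tendsto (fun i => ρ.hom (L (e i)) (ρ.hom y ξ)) l (𝓝 (ρ.hom (L y) ξ)) := by
    intro y ξ
    have hc : Continuous fun z => ρ.hom (L z) ξ :=
      (ρ.continuous_hom.comp L.continuous).clm_apply continuous_const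
    refine ((hc.tendsto y).comp (he y)).congr fun i => ?_
    simp only [Function.comp_apply, hL, map_mul]
    rfl
  obtain ⟨T, hT, hTlim⟩ := ContinuousLinearMap.exists_tendsto_apply_of_dense_span hA
    hρ.dense_span (by rintro _ ⟨y, ξ, rfl⟩; exact ⟨_, hlim y ξ⟩)
  exact ⟨T, hT, fun y => ContinuousLinearMap.ext fun ξ => tendsto_nhds_unique (hTlim _) (hlim y ξ)⟩

end StarRepOn

namespace QuotientModel

variable {X Z : Type} [NonUnitalNormedRing X] [StarRing X] [NormedSpace ℂ X]
  [NonUnitalNormedRing Z] [StarRing Z] [NormedSpace ℂ Z] {J : Submodule ℂ X}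
  (mZ : QuotientModel X J Z)

lemma norm_proj_le (x : X) : ‖mZ.proj x‖ ≤ ‖x‖ := by
  simpa [mZ.norm_eq] using Metric.infDist_le_dist_of_mem (x := x) J.zero_mem

lemma isPrimitiveIdeal_comap {Q : Submodule ℂ Z} (hQ : IsPrimitiveIdeal Z Q) :
    IsPrimitiveIdeal X (Q.comap (mZ.proj : X →ₗ[ℂ] Z)) := by
  obtain ⟨σ, ⟨hσ, hσinv⟩, hker⟩ := hQ
  let π : StarRepOn X :=
    { carrier := σ.carrier
      hom := σ.hom.comp mZ.proj
      contractive := fun x => (σ.contractive _).trans (mZ.norm_proj_le x) }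
  refine ⟨π, ⟨?_, ?_⟩, ?_⟩
  · obtain ⟨z, hz⟩ := hσ
    obtain ⟨x, rfl⟩ := mZ.surjective z
    exact ⟨x, hz⟩
  · intro U hU hUinv
    refine hσinv U hU fun z => ?_
    obtain ⟨x, rfl⟩ := mZ.surjective z
    exact hUinv x
  · ext x
    exact Set.ext_iff.1 hker (mZ.proj x)

lemma isClosedIdeal_closure_map {I : Submodule ℂ X} (hI : IsClosedIdeal X I) :
    IsClosedIdeal Z (I.map (mZ.proj : X →ₗ[ℂ] Z)).topologicalClosure := by
  refine isClosedIdeal_topologicalClosure ?_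
  rintro z _ ⟨x, hx, rfl⟩
  obtain ⟨w, rfl⟩ := mZ.surjective z
  exact ⟨⟨w * x, hI.2.1 w x hx, map_mul mZ.proj w x⟩, ⟨x * w, hI.2.2 w x hx, map_mul mZ.proj x w⟩⟩

lemma closure_map_eq_of_hullOf_eq (hZ : HasSpectralSynthesis Z) {I I' : Submodule ℂ X}
    (hI : IsClosedIdeal X I) (hI' : IsClosedIdeal X I')
    (h : hullOf X (I : Set X) = hullOf X I') :
    (I.map (mZ.proj : X →ₗ[ℂ] Z)).topologicalClosure =
      (I'.map (mZ.proj : X →ₗ[ℂ] Z)).topologicalClosure := by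
  refine hZ.eq_of_lift (fun I => (I.map (mZ.proj : X →ₗ[ℂ] Z)).topologicalClosure)
    (fun I I' h => Submodule.topologicalClosure_mono (Submodule.map_mono h))
    (fun I hI => mZ.isClosedIdeal_closure_map hI) (fun I _ Q hQ hIQ => ?_) hI hI' h
  refine ⟨_, mZ.isPrimitiveIdeal_comap hQ, fun x hx => hIQ ?_, ?_⟩
  · exact Submodule.le_topologicalClosure _ ⟨x, hx, rfl⟩
  · exact Submodule.topologicalClosure_minimal _ (Submodule.map_comap_le _ _)
      hQ.isClosedIdeal.1

lemma comap_closure_map_le (K : Submodule ℂ X) :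
    (K.map (mZ.proj : X →ₗ[ℂ] Z)).topologicalClosure.comap (mZ.proj : X →ₗ[ℂ] Z) ≤
      (K ⊔ J).topologicalClosure := by
  intro x hx
  rw [Submodule.mem_comap, ← SetLike.mem_coe, Submodule.topologicalClosure_coe,
    Metric.mem_closure_iff] at hx
  rw [← SetLike.mem_coe, Submodule.topologicalClosure_coe, Metric.mem_closure_iff]
  intro ε hε
  obtain ⟨_, ⟨k, hk, rfl⟩, hxk⟩ := hx ε hε
  have hxk : Metric.infDist (x - k) J < ε := by
    rw [← mZ.norm_eq]
    rwa [dist_eq_norm, ← map_sub] at hxk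
  obtain ⟨j, hj, hxj⟩ := (Metric.infDist_lt_iff ⟨0, J.zero_mem⟩).1 hxk
  refine ⟨k + j, Submodule.add_mem_sup hk hj, ?_⟩
  rwa [dist_eq_norm, ← sub_sub, ← dist_eq_norm]

end QuotientModel

namespace SubalgebraModel

variable {X Y : Type} [NonUnitalNormedRing X] [StarRing X] [NormedSpace ℂ X]
  [NonUnitalNormedRing Y] [StarRing Y] [NormedSpace ℂ Y] {J : Submodule ℂ X}
  (mY : SubalgebraModel X J Y)

lemma isometry_incl : Isometry mY.incl :=
  AddMonoidHomClass.isometry_of_norm mY.incl mY.isometric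

lemma injective_incl : Function.Injective mY.incl :=
  mY.isometry_incl.injective

lemma incl_mem (y : Y) : mY.incl y ∈ J := by
  rw [← SetLike.mem_coe, ← mY.range_eq]
  exact ⟨y, rfl⟩

lemma exists_incl_eq {x : X} (hx : x ∈ J) : ∃ y, mY.incl y = x := by
  rwa [← SetLike.mem_coe, ← mY.range_eq] at hx

lemma isClosedIdeal_comap {I : Submodule ℂ X} (hI : IsClosedIdeal X I) :
    IsClosedIdeal Y (I.comap (mY.incl : Y →ₗ[ℂ] X)) := by
  refine ⟨hI.1.preimage mY.isometry_incl.continuous, fun y y' hy' => ?_, fun y y' hy' => ?_⟩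
  · exact show mY.incl (y * y') ∈ I by rw [map_mul]; exact hI.2.1 _ _ hy'
  · exact show mY.incl (y' * y) ∈ I by rw [map_mul]; exact hI.2.2 _ _ hy'

lemma inf_le_of_comap_le {K L : Submodule ℂ X}
    (h : K.comap (mY.incl : Y →ₗ[ℂ] X) ≤ L.comap (mY.incl : Y →ₗ[ℂ] X)) : K ⊓ J ≤ L := by
  rintro _ ⟨hxK, hxJ⟩
  obtain ⟨y, rfl⟩ := mY.exists_incl_eq hxJ
  exact h hxK

lemma hasBoundedApproxIdentity_top (mY : SubalgebraModel X J Y)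
    (hbai : HasBoundedApproxIdentity X J) :
    HasBoundedApproxIdentity Y ⊤ := by
  obtain ⟨ι, l, e, C, hl, he, hconv⟩ := hbai
  choose f hf using fun i => mY.exists_incl_eq (he i).1
  refine ⟨ι, l, f, C, hl, fun i => ⟨trivial, ?_⟩, fun y _ => ?_⟩
  · rw [← mY.isometric, hf]
    exact (he i).2
  simp only [mY.isometry_incl.isEmbedding.isInducing.tendsto_nhds_iff, Function.comp_def,
    map_mul, hf]
  exact hconv _ (mY.incl_mem y)

lemma exists_lmul [SMulCommClass ℂ X X] (hJ : IsClosedIdeal X J) (x : X) :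
    ∃ L : Y →L[ℂ] Y, ‖L‖ ≤ ‖x‖ ∧ ∀ y, mY.incl (L y) = x * mY.incl y := by
  choose f hf using fun y => mY.exists_incl_eq (hJ.2.1 x _ (mY.incl_mem y))
  let L : Y →ₗ[ℂ] Y :=
    { toFun := f
      map_add' := fun y y' => mY.injective_incl (by simp [hf, mul_add])
      map_smul' := fun c y => mY.injective_incl (by simp [hf, mul_smul_comm]) }
  have hL : ∀ y, ‖L y‖ ≤ ‖x‖ * ‖y‖ := fun y => by
    rw [← mY.isometric, ← mY.isometric y]
    exact (congrArg norm (hf y)).trans_le (norm_mul_le _ _)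
  exact ⟨L.mkContinuous ‖x‖ hL, L.mkContinuous_norm_le (norm_nonneg x) hL, hf⟩

variable [IsScalarTower ℂ X X] [SMulCommClass ℂ X X]

/-- `π x` is the operator attached to left multiplication by `x` on `Y ≅ J`; identities between
the `π x` are checked after right multiplication by the `ρ y`, which separate operators since `ρ`
is irreducible. -/
lemma exists_starAlgHom_extend (hJ : IsClosedIdeal X J) (hbai : HasBoundedApproxIdentity X J)
    {ρ : StarRepOn Y} (hρ : ρ.IsIrreducible) :
    ∃ (π : X →⋆ₙₐ[ℂ] (ρ.carrier →L[ℂ] ρ.carrier)) (C : ℝ), (∀ x, ‖π x‖ ≤ C * ‖x‖) ∧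
      ∀ x y y', mY.incl y' = x * mY.incl y → π x * ρ.hom y = ρ.hom y' := by
  obtain ⟨ι, l, e, C, hl, he, hconv⟩ := mY.hasBoundedApproxIdentity_top hbai
  have hC : 0 ≤ C := (norm_nonneg _).trans (he (nonempty_of_neBot l).some).2
  choose L hLx hL using mY.exists_lmul hJ
  have hLmul : ∀ x y y', L x (y * y') = L x y * y' := fun x y y' =>
    mY.injective_incl (by simp only [hL, map_mul, mul_assoc])
  choose T hTL hT using fun x => hρ.exists_mul_hom_eq (fun i => (he i).2)
    (fun y => (hconv y trivial).1) (L x) (hLmul x)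
  have key : ∀ x y y', mY.incl y' = x * mY.incl y → T x * ρ.hom y = ρ.hom y' :=
    fun x y y' h => by rw [hT, mY.injective_incl ((hL x y).trans h.symm)]
  refine ⟨{ toFun := T
            map_smul' := ?_
            map_zero' := ?_
            map_add' := ?_
            map_mul' := ?_
            map_star' := ?_ }, C, fun x => ?_, key⟩
  · refine fun c x => hρ.eq_of_mul_hom_eq fun y => ?_
    rw [key _ y (c • L x y) (by rw [map_smul, hL, smul_mul_assoc]), map_smul, smul_mul_assoc, hT]
    rfl
  · refine hρ.eq_of_mul_hom_eq fun y => ?_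
    rw [key _ y 0 (by rw [map_zero, zero_mul]), map_zero, zero_mul]
  · refine fun x x' => hρ.eq_of_mul_hom_eq fun y => ?_
    rw [key _ y (L x y + L x' y) (by rw [map_add, hL, hL, add_mul]), map_add, add_mul, hT, hT]
  · refine fun x x' => hρ.eq_of_mul_hom_eq fun y => ?_
    rw [key _ y (L x (L x' y)) (by rw [hL, hL, mul_assoc]), mul_assoc, hT, hT]
  · refine fun x => hρ.eq_of_hom_mul_eq fun y' => hρ.eq_of_mul_hom_eq fun y => ?_
    have hstar : ρ.hom y' * star (T x) = ρ.hom (star (L x (star y'))) := by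
      rw [← star_star (ρ.hom y'), ← map_star ρ.hom, ← star_mul, hT, map_star ρ.hom]
    have hid : star (L x (star y')) * y = y' * L (star x) y :=
      mY.injective_incl (by simp only [map_mul, map_star, hL, star_mul, star_star, mul_assoc])
    simp only [mul_assoc, hT]
    rw [← mul_assoc, hstar, ← map_mul, ← map_mul, hid]
  · exact (hTL x).trans (mul_le_mul_of_nonneg_right (hLx x) hC) |>.trans_eq (mul_comm _ _)

lemma exists_isPrimitiveIdeal_extend [NormedStarGroup X] (hJ : IsClosedIdeal X J)
    (hbai : HasBoundedApproxIdentity X J) {I : Submodule ℂ X} (hI : IsClosedIdeal X I)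
    {Q : Submodule ℂ Y} (hQ : IsPrimitiveIdeal Y Q) (hIQ : I.comap (mY.incl : Y →ₗ[ℂ] X) ≤ Q) :
    ∃ P, IsPrimitiveIdeal X P ∧ I ≤ P ∧ P.comap (mY.incl : Y →ₗ[ℂ] X) ≤ Q := by
  obtain ⟨ρ, hρ, hker⟩ := hQ
  have hmem : ∀ y, y ∈ Q ↔ ρ.hom y = 0 := fun y => Set.ext_iff.1 hker y
  obtain ⟨π, C, hπC, hπ⟩ := mY.exists_starAlgHom_extend hJ hbai hρ
  have hπincl : ∀ y, π (mY.incl y) = ρ.hom y := fun y =>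
    hρ.eq_of_mul_hom_eq fun y' => by rw [hπ _ y' (y * y') (map_mul _ _ _), map_mul]
  let π' : StarRepOn X :=
    { carrier := ρ.carrier
      hom := π
      contractive := π.norm_apply_le_of_le_mul hπC }
  refine ⟨LinearMap.ker (π : X →ₗ[ℂ] ρ.carrier →L[ℂ] ρ.carrier), ⟨π', ⟨?_, ?_⟩, rfl⟩, ?_, ?_⟩
  · obtain ⟨y, hy⟩ := hρ.1
    exact ⟨mY.incl y, by simpa [π', hπincl] using hy⟩
  · refine fun U hU hinv => hρ.2 U hU fun y v hv => ?_
    simpa [π', hπincl] using hinv (mY.incl y) v hv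
  · intro x hx
    show π x = 0
    refine hρ.eq_of_mul_hom_eq fun y => ?_
    obtain ⟨y', hy'⟩ := mY.exists_incl_eq (hJ.2.1 x _ (mY.incl_mem y))
    have hy'Q : y' ∈ Q := hIQ (show mY.incl y' ∈ I by rw [hy']; exact hI.2.2 _ _ hx)
    rw [hπ x y y' hy', (hmem y').1 hy'Q, zero_mul]
  · intro y hy
    exact (hmem y).2 ((hπincl y).symm.trans hy)

lemma comap_eq_of_hullOf_eq [NormedStarGroup X] (hJ : IsClosedIdeal X J)
    (hbai : HasBoundedApproxIdentity X J) (hY : HasSpectralSynthesis Y) {I I' : Submodule ℂ X}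
    (hI : IsClosedIdeal X I) (hI' : IsClosedIdeal X I')
    (h : hullOf X (I : Set X) = hullOf X I') :
    I.comap (mY.incl : Y →ₗ[ℂ] X) = I'.comap (mY.incl : Y →ₗ[ℂ] X) :=
  hY.eq_of_lift (fun I => I.comap (mY.incl : Y →ₗ[ℂ] X)) (fun _ _ h => Submodule.comap_mono h)
    (fun _ hI => mY.isClosedIdeal_comap hI)
    (fun _ hI _ hQ hIQ => mY.exists_isPrimitiveIdeal_extend hJ hbai hI hQ hIQ) hI hI' h

end SubalgebraModel

theorem hasSpectralSynthesis_of_ideal_and_quotient_general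
    (X : Type) [NonUnitalNormedRing X] [StarRing X] [NormedSpace ℂ X]
    [IsScalarTower ℂ X X] [SMulCommClass ℂ X X] [NormedStarGroup X]
    (J : Submodule ℂ X) (hJ : IsClosedIdeal X J)
    (hbai : HasBoundedApproxIdentity X J)
    (Y : Type) [NonUnitalNormedRing Y] [StarRing Y] [NormedSpace ℂ Y]
    (mY : SubalgebraModel X J Y) (hssY : HasSpectralSynthesis Y)
    (Z : Type) [NonUnitalNormedRing Z] [StarRing Z] [NormedSpace ℂ Z]
    (mZ : QuotientModel X J Z) (hssZ : HasSpectralSynthesis Z) :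
    HasSpectralSynthesis X := by
  intro E hE L hL hLE
  set K := kernelOf X E
  have hK : IsClosedIdeal X K := isClosedIdeal_kernelOf hE.1
  have hhull : hullOf X (L : Set X) = hullOf X K := hLE.trans hE.2.symm
  have hLK : L ≤ K := fun x hx => Submodule.mem_sInf.2 fun P hP => (hLE.symm ▸ hP).2 hx
  refine le_antisymm hLK (le_of_inf_le_of_le_closure_sup hbai hJ hK hL ?_ ?_)
  · exact mY.inf_le_of_comap_le (mY.comap_eq_of_hullOf_eq hJ hbai hssY hL hK hhull).ge
  · calc K ≤ (K.map (mZ.proj : X →ₗ[ℂ] Z)).topologicalClosure.comap (mZ.proj : X →ₗ[ℂ] Z) :=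
          fun x hx => Submodule.le_topologicalClosure _ ⟨x, hx, rfl⟩
      _ = (L.map (mZ.proj : X →ₗ[ℂ] Z)).topologicalClosure.comap (mZ.proj : X →ₗ[ℂ] Z) := by
          rw [mZ.closure_map_eq_of_hullOf_eq hssZ hL hK hhull]
      _ ≤ (L ⊔ J).topologicalClosure := mZ.comap_closure_map_le L

theorem hasSpectralSynthesis_of_ideal_and_quotient
    (X : Type) [NonUnitalNormedRing X] [StarRing X] [NormedSpace ℂ X] [CompleteSpace X]
    [IsScalarTower ℂ X X] [SMulCommClass ℂ X X] [StarModule ℂ X] [NormedStarGroup X]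
    (hWX : WienerProperty X)
    (J : Submodule ℂ X) (hJ : IsClosedIdeal X J) (hJstar : IsStarIdeal X J)
    (hbai : HasBoundedApproxIdentity X J)
    (Y : Type) [NonUnitalNormedRing Y] [StarRing Y] [NormedSpace ℂ Y] [CompleteSpace Y]
    [IsScalarTower ℂ Y Y] [SMulCommClass ℂ Y Y] [StarModule ℂ Y] [NormedStarGroup Y]
    (mY : SubalgebraModel X J Y) (hWY : WienerProperty Y) (hssY : HasSpectralSynthesis Y)
    (Z : Type) [NonUnitalNormedRing Z] [StarRing Z] [NormedSpace ℂ Z] [CompleteSpace Z]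
    [IsScalarTower ℂ Z Z] [SMulCommClass ℂ Z Z] [StarModule ℂ Z] [NormedStarGroup Z]
    (mZ : QuotientModel X J Z) (hssZ : HasSpectralSynthesis Z) :
    HasSpectralSynthesis X :=
  hasSpectralSynthesis_of_ideal_and_quotient_general X J hJ hbai Y mY hssY Z mZ hssZ
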